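/- (Fay identity) For τ in the upper half-plane and all ξ₁, ξ₂, α₁, α₂ ∈ ℂ such that all Kronecker series values occurring below are defined (i.e. all theta denominators are nonzero), one has F_τ(ξ₁, α₁)·F_τ(ξ₂, α₂) = F_τ(ξ₁−ξ₂, α₁)·F_τ(ξ₂, α₁+α₂) + F_τ(ξ₂−ξ₁, α₂)·F_τ(ξ₁, α₁+α₂). -/

import Mathlib

noncomputable section

/-- The odd Jacobi theta function
`θ_τ(ξ) = Σ_{n ∈ ℤ} (-1)^n e^{πiτ(n+1/2)²} e^{2πi(n+1/2)ξ}`. -/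
def theta (τ ξ : ℂ) : ℂ :=
  ∑' n : ℤ, (-1 : ℂ) ^ n * Complex.exp (Real.pi * Complex.I * τ * ((n : ℂ) + 1 / 2) ^ 2) *
    Complex.exp (2 * Real.pi * Complex.I * ((n : ℂ) + 1 / 2) * ξ)

/-- The Kronecker series `F_τ(ξ, α) = θ'_τ(0)·θ_τ(ξ+α)/(θ_τ(ξ)·θ_τ(α))`. -/
def kronecker (τ ξ α : ℂ) : ℂ :=
  deriv (theta τ) 0 * theta τ (ξ + α) / (theta τ ξ * theta τ α)

/-!
Write `θ_τ(ξ) = Σ_m ± e^{πiτm² + 2πimξ}` over half-integers `m = n + 1/2`, the sign being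
`(-1)^n`. A product of four theta values `θ(z₁)⋯θ(z₄)` is then a sum over `(ℤ + 1/2)⁴` of
`± e^{πiτ|m|² + 2πi⟨m, z⟩}`. In the three-term identity `theta_fay` the arguments `z` of the
three products are related by orthogonal matrices with entries `±1/2`; the dual substitution on
the index vectors preserves `|m|²` and `⟨m, z⟩` and maps the indices with even (odd) coordinate
sum `n₁ + n₂ + n₃ + n₄` bijectively onto one parity class of another product, up to sign. After
splitting every fourfold sum by parity, the even part of the left side is the even part of the
first product on the right, its odd part is the odd part of the second, and the two remaining parts
cancel. Clearing the theta denominators of `F` and using that `θ` is odd gives the Fay identity.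
-/

open Complex
open scoped Real

def thetaTerm (τ z : ℂ) (n : ℤ) : ℂ :=
  cexp (n * (π * I) + π * I * τ * (n + 1 / 2) ^ 2 + 2 * π * I * (n + 1 / 2) * z)

theorem theta_eq_tsum_thetaTerm (τ z : ℂ) : theta τ z = ∑' n : ℤ, thetaTerm τ z n := by
  refine tsum_congr fun n => ?_
  rw [thetaTerm, exp_add, exp_add, exp_int_mul, exp_pi_mul_I]

theorem summable_thetaTerm {τ : ℂ} (hτ : 0 < τ.im) (z : ℂ) : Summable (thetaTerm τ z) := by
  have hterm (n : ℤ) : thetaTerm τ z n =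
      cexp (π * I * τ / 4 + π * I * z) * jacobiTheta₂_term n (z + τ / 2 + 1 / 2) τ := by
    rw [thetaTerm, jacobiTheta₂_term, ← exp_add]
    ring_nf
  rw [funext hterm]
  exact ((summable_jacobiTheta₂_term_iff (z + τ / 2 + 1 / 2) τ).2 hτ).mul_left _

theorem thetaTerm_neg (τ z : ℂ) (n : ℤ) : thetaTerm τ (-z) n = -thetaTerm τ z (-1 - n) := by
  rw [thetaTerm, thetaTerm, ← exp_add_pi_mul_I]
  exact exp_eq_exp_iff_exists_int.2 ⟨n, by push_cast; ring⟩

theorem theta_neg (τ z : ℂ) : theta τ (-z) = -theta τ z := by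
  rw [theta_eq_tsum_thetaTerm, theta_eq_tsum_thetaTerm, ← tsum_neg,
    ← (Equiv.subLeft (-1 : ℤ)).tsum_eq (fun n => -thetaTerm τ z n)]
  exact tsum_congr (thetaTerm_neg τ z)

def thetaProdTerm (τ z₁ z₂ z₃ z₄ : ℂ) (n : ℤ × ℤ × ℤ × ℤ) : ℂ :=
  thetaTerm τ z₁ n.1 * (thetaTerm τ z₂ n.2.1 * (thetaTerm τ z₃ n.2.2.1 * thetaTerm τ z₄ n.2.2.2))

section Product

variable {τ : ℂ} (hτ : 0 < τ.im) (z₁ z₂ z₃ z₄ : ℂ)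
include hτ

theorem summable_thetaProdTerm : Summable (thetaProdTerm τ z₁ z₂ z₃ z₄) := by
  have h z : Summable fun n : ℤ => ‖thetaTerm τ z n‖ := (summable_thetaTerm hτ z).norm
  exact ((h z₁).mul_norm ((h z₂).mul_norm ((h z₃).mul_norm (h z₄)))).of_norm

theorem tsum_thetaProdTerm :
    ∑' n, thetaProdTerm τ z₁ z₂ z₃ z₄ n =
      theta τ z₁ * (theta τ z₂ * (theta τ z₃ * theta τ z₄)) := by
  have h z : Summable fun n : ℤ => ‖thetaTerm τ z n‖ := (summable_thetaTerm hτ z).norm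
  simp only [theta_eq_tsum_thetaTerm]
  rw [tsum_mul_tsum_of_summable_norm (h z₃) (h z₄),
    tsum_mul_tsum_of_summable_norm (h z₂) ((h z₃).mul_norm (h z₄)),
    tsum_mul_tsum_of_summable_norm (h z₁) ((h z₂).mul_norm ((h z₃).mul_norm (h z₄)))]
  rfl

end Product

def parityParam (r : ℤ) (a : ℤ × ℤ × ℤ × ℤ) : ℤ × ℤ × ℤ × ℤ :=
  (a.1, a.2.1, a.2.2.1, a.1 + a.2.1 + a.2.2.1 + 2 * a.2.2.2 + r)

def parityEquiv : (ℤ × ℤ × ℤ × ℤ) ⊕ (ℤ × ℤ × ℤ × ℤ) ≃ ℤ × ℤ × ℤ × ℤ where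
  toFun := Sum.elim (parityParam 0) (parityParam 1)
  invFun n :=
    let k := n.2.2.2 - n.1 - n.2.1 - n.2.2.1
    -- `Int` division rounds down, so `k / 2` is the right fourth coordinate for both parities
    if k % 2 = 0 then .inl (n.1, n.2.1, n.2.2.1, k / 2) else .inr (n.1, n.2.1, n.2.2.1, k / 2)
  left_inv := by
    rintro (⟨a, b, c, d⟩ | ⟨a, b, c, d⟩) <;>
      dsimp only [Sum.elim_inl, Sum.elim_inr, parityParam] <;> split_ifs <;> simp_all <;> omega
  right_inv := by
    rintro ⟨a, b, c, d⟩
    dsimp only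
    split_ifs <;> simp [parityParam] <;> omega

theorem tsum_eq_tsum_parityParam_add {M : Type*} [AddCommGroup M] [UniformSpace M]
    [IsUniformAddGroup M] [CompleteSpace M] [T2Space M] {f : ℤ × ℤ × ℤ × ℤ → M}
    (hf : Summable f) :
    ∑' n, f n = ∑' a, f (parityParam 0 a) + ∑' a, f (parityParam 1 a) := by
  have hf' : Summable (f ∘ parityEquiv) := parityEquiv.summable_iff.2 hf
  rw [← parityEquiv.tsum_eq]
  exact (hf'.comp_injective Sum.inl_injective).tsum_sum (hf'.comp_injective Sum.inr_injective)

def fayReindex₁ : ℤ × ℤ × ℤ × ℤ ≃ ℤ × ℤ × ℤ × ℤ where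
  toFun := fun (a, b, c, d) => (a + c + d, a + b + d, -d, -a)
  invFun := fun (p, q, r, s) => (-s, q + r + s, p + r + s, -r)
  left_inv _ := by ext <;> simp
  right_inv _ := by ext <;> simp

def fayReindex₂ : ℤ × ℤ × ℤ × ℤ ≃ ℤ × ℤ × ℤ × ℤ where
  toFun := fun (a, b, c, d) => (-b - d - 1, a + b + c + d + 1, -c - d - 1, d)
  invFun := fun (p, q, r, s) => (p + q + r + s + 1, -p - s - 1, -r - s - 1, s)
  left_inv _ := by ext <;> simp <;> ring
  right_inv _ := by ext <;> simp <;> ring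

def fayReindex₃ : ℤ × ℤ × ℤ × ℤ ≃ ℤ × ℤ × ℤ × ℤ where
  toFun := fun (a, b, c, d) => (-b - d - 1, a + b + c + d + 1, -a - d - 1, -c)
  invFun := fun (p, q, r, s) => (p + q + s, q + r + s, -s, -p - q - r - s - 1)
  left_inv _ := by ext <;> simp <;> ring
  right_inv _ := by ext <;> simp <;> ring

section Reindex

variable (τ ξ₁ ξ₂ α₁ α₂ : ℂ)

theorem thetaProdTerm_parityParam_zero_eq (x : ℤ × ℤ × ℤ × ℤ) :
    thetaProdTerm τ (ξ₁ + α₁) (ξ₂ + α₂) (ξ₁ - ξ₂) (α₁ + α₂) (parityParam 0 x) =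
      thetaProdTerm τ (ξ₁ - ξ₂ + α₁) (ξ₂ + (α₁ + α₂)) ξ₁ α₂ (parityParam 0 (fayReindex₁ x)) := by
  obtain ⟨a, b, c, d⟩ := x
  simp only [thetaProdTerm, thetaTerm, parityParam, fayReindex₁, Equiv.coe_fn_mk, ← exp_add]
  exact exp_eq_exp_iff_exists_int.2 ⟨0, by push_cast; ring⟩

theorem thetaProdTerm_parityParam_one_eq (x : ℤ × ℤ × ℤ × ℤ) :
    thetaProdTerm τ (ξ₁ + α₁) (ξ₂ + α₂) (ξ₁ - ξ₂) (α₁ + α₂) (parityParam 1 x) =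
      thetaProdTerm τ (ξ₁ - ξ₂ - α₂) (ξ₁ + (α₁ + α₂)) ξ₂ α₁ (parityParam 1 (fayReindex₂ x)) := by
  obtain ⟨a, b, c, d⟩ := x
  simp only [thetaProdTerm, thetaTerm, parityParam, fayReindex₂, Equiv.coe_fn_mk, ← exp_add]
  exact exp_eq_exp_iff_exists_int.2 ⟨b + c + d + 1, by push_cast; ring⟩

theorem thetaProdTerm_parityParam_one_eq_neg (x : ℤ × ℤ × ℤ × ℤ) :
    thetaProdTerm τ (ξ₁ - ξ₂ + α₁) (ξ₂ + (α₁ + α₂)) ξ₁ α₂ (parityParam 1 x) =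
      -thetaProdTerm τ (ξ₁ - ξ₂ - α₂) (ξ₁ + (α₁ + α₂)) ξ₂ α₁ (parityParam 0 (fayReindex₃ x)) := by
  obtain ⟨a, b, c, d⟩ := x
  simp only [thetaProdTerm, thetaTerm, parityParam, fayReindex₃, Equiv.coe_fn_mk, ← exp_add]
  rw [← exp_add_pi_mul_I]
  exact exp_eq_exp_iff_exists_int.2 ⟨a + b + c + 2 * d + 1, by push_cast; ring⟩

end Reindex

theorem theta_fay {τ : ℂ} (hτ : 0 < τ.im) (ξ₁ ξ₂ α₁ α₂ : ℂ) :
    theta τ (ξ₁ + α₁) * (theta τ (ξ₂ + α₂) * (theta τ (ξ₁ - ξ₂) * theta τ (α₁ + α₂))) =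
      theta τ (ξ₁ - ξ₂ + α₁) * (theta τ (ξ₂ + (α₁ + α₂)) * (theta τ ξ₁ * theta τ α₂)) +
      theta τ (ξ₁ - ξ₂ - α₂) * (theta τ (ξ₁ + (α₁ + α₂)) * (theta τ ξ₂ * theta τ α₁)) := by
  simp only [← tsum_thetaProdTerm hτ]
  rw [tsum_eq_tsum_parityParam_add (summable_thetaProdTerm hτ _ _ _ _),
    tsum_eq_tsum_parityParam_add (summable_thetaProdTerm hτ _ _ _ _),
    tsum_eq_tsum_parityParam_add (summable_thetaProdTerm hτ _ _ _ _),
    tsum_congr (thetaProdTerm_parityParam_zero_eq τ ξ₁ ξ₂ α₁ α₂),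
    tsum_congr (thetaProdTerm_parityParam_one_eq τ ξ₁ ξ₂ α₁ α₂),
    tsum_congr (thetaProdTerm_parityParam_one_eq_neg τ ξ₁ ξ₂ α₁ α₂), tsum_neg,
    fayReindex₁.tsum_eq (fun a => thetaProdTerm τ _ _ _ _ (parityParam 0 a)),
    fayReindex₂.tsum_eq (fun a => thetaProdTerm τ _ _ _ _ (parityParam 1 a)),
    fayReindex₃.tsum_eq (fun a => thetaProdTerm τ _ _ _ _ (parityParam 0 a))]
  ring

theorem kronecker_fay (τ ξ₁ ξ₂ α₁ α₂ : ℂ) (hτ : 0 < τ.im)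
    (hξ₁ : theta τ ξ₁ ≠ 0) (hξ₂ : theta τ ξ₂ ≠ 0)
    (hα₁ : theta τ α₁ ≠ 0) (hα₂ : theta τ α₂ ≠ 0)
    (hξ₁₂ : theta τ (ξ₁ - ξ₂) ≠ 0)
    (hα₁₂ : theta τ (α₁ + α₂) ≠ 0) :
    kronecker τ ξ₁ α₁ * kronecker τ ξ₂ α₂ =
      kronecker τ (ξ₁ - ξ₂) α₁ * kronecker τ ξ₂ (α₁ + α₂) +
      kronecker τ (ξ₂ - ξ₁) α₂ * kronecker τ ξ₁ (α₁ + α₂) := by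
  have hodd : theta τ (ξ₂ - ξ₁) = -theta τ (ξ₁ - ξ₂) := by rw [← theta_neg, neg_sub]
  have hodd' : theta τ (ξ₂ - ξ₁ + α₂) = -theta τ (ξ₁ - ξ₂ - α₂) := by
    rw [← theta_neg]
    ring_nf
  simp only [kronecker, hodd, hodd']
  field_simp
  linear_combination (deriv (theta τ) 0) ^ 2 * theta_fay hτ ξ₁ ξ₂ α₁ α₂

end
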